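/- Let n ≥ 2, N = n(n−1), and let u = [u_1, …, u_N] be a subword of λ̂_n with u_1 u_2 ⋯ u_N = e. Then for every integer k, every a ∈ {1, …, N}, and every length L with 1 ≤ L ≤ N, the cyclic segment product w = u_a u_{a+1} ⋯ u_{a+L−1} (indices taken modulo N with representatives in {1, …, N}) satisfies |w(k) − k| ≤ n − 2. -/

import Mathlib

/-- The affine reflection `((i,j))` of the affine symmetric group `W̃ₙ`, as a function
`ℤ → ℤ`: it interchanges `i + k*n` and `j + k*n` for every `k ∈ ℤ` and fixes all
integers not congruent to `i` or `j` mod `n`. -/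
def affRefl (n : ℕ) (i j : ℤ) : ℤ → ℤ := fun k =>
  if (k - i) % (n : ℤ) = 0 then k - i + j
  else if (k - j) % (n : ℤ) = 0 then k - j + i
  else k

/-- `t : ℤ → ℤ` is an affine reflection of `W̃ₙ`. -/
def IsAffRefl (n : ℕ) (t : ℤ → ℤ) : Prop :=
  ∃ i j : ℤ, (i - j) % (n : ℤ) ≠ 0 ∧ t = affRefl n i j

/-- The simple reflection `sⱼ = ((j, j+1))`. -/
def simpleRefl (n : ℕ) (j : ℤ) : ℤ → ℤ := affRefl n j (j + 1)

/-- The translation `λₙ`: it sends `k ≡ 0 (mod n)` to `k - n(n-1)` and all other `k`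
to `k + n`. -/
def lam (n : ℕ) : ℤ → ℤ := fun k =>
  if k % (n : ℤ) = 0 then k - (n : ℤ) * ((n : ℤ) - 1) else k + (n : ℤ)

/-- The product `r₁ r₂ ⋯ rₘ` of a list of elements, with `(w·v)(k) = w(v(k))`. -/
def listProd (l : List (ℤ → ℤ)) : ℤ → ℤ := l.foldr (· ∘ ·) id

/-- `l` is a factorization of `λₙ` into affine reflections. -/
def IsFactorization (n : ℕ) (l : List (ℤ → ℤ)) : Prop :=
  (∀ t ∈ l, IsAffRefl n t) ∧ listProd l = lam n

/-- A tree-like factorization of `λₙ`: a factorization `[r₁, …, r_{2n-2}]` into `2n-2`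
affine reflections such that there are integers `a₀, …, a_{2n-2}` and `b₁, …, b_{2n-2}`
with `r_k = ((a_{k-1}, b_k))`, `a_{k-1} < b_k` and `a_k ≡ b_k (mod n)`
(0-based: `r` at index `k` equals `((a k, b (k+1)))`). -/
def IsTreeLike (n : ℕ) (l : List (ℤ → ℤ)) : Prop :=
  IsFactorization n l ∧ l.length = 2 * n - 2 ∧
  ∃ a b : ℕ → ℤ, ∀ k : ℕ, ∀ h : k < l.length,
    l.get ⟨k, h⟩ = affRefl n (a k) (b (k + 1)) ∧
    a k < b (k + 1) ∧ (a (k + 1) - b (k + 1)) % (n : ℤ) = 0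

/-- `a₀ < a₁ < ⋯` is a strictly increasing endpoint sequence of the factorization `l`:
`r_ℓ = ((a_{ℓ-1}, a_ℓ))` (0-based: `r` at index `k` is `((a k, a (k+1)))`). -/
def EndSeq (n : ℕ) (l : List (ℤ → ℤ)) (a : ℕ → ℤ) : Prop :=
  ∀ k : ℕ, ∀ h : k < l.length,
    a k < a (k + 1) ∧ l.get ⟨k, h⟩ = affRefl n (a k) (a (k + 1))

/-- The representative of `x` modulo `n` lying in `{1, …, n}`. -/
def resOne (n : ℕ) (x : ℤ) : ℤ := if x % (n : ℤ) = 0 then (n : ℤ) else x % (n : ℤ)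

/-- `nb_k(r)` for the endpoint sequence `a` of a tree-like factorization of `λₙ`:
the list of the residues `a_i mod n` (representatives in `{1, …, n}`), in increasing
order of the index `i ∈ {1, …, 2n-2}`, over those `i` with `a_{i-1} ≡ k (mod n)`
(0-based: indices `i < 2n-2` with `a i ≡ k`, recording the residue of `a (i+1)`). -/
def nb (n : ℕ) (a : ℕ → ℤ) (k : ℤ) : List ℤ :=
  ((List.range (2 * n - 2)).filter (fun i => decide ((a i - k) % (n : ℤ) = 0))).map
    (fun i => resOne n (a (i + 1)))

/-- A cyclic factorization of `λₙ`: a tree-like factorization such that, for an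
endpoint sequence `a` as above, (i) `nb_n` is strictly increasing; and (ii) for each
`k ∈ {1, …, n-1}`, writing `nb_k = [c₁, …, c_ℓ]`, there is `j ∈ {1, …, ℓ}` with
`c_j < c_{j+1} < ⋯ < c_{ℓ-1} < k < c₁ < ⋯ < c_{j-1}`. -/
def IsCyclicFact (n : ℕ) (l : List (ℤ → ℤ)) : Prop :=
  IsTreeLike n l ∧
  ∃ a : ℕ → ℤ, EndSeq n l a ∧
    List.Chain' (· < ·) (nb n a (n : ℤ)) ∧
    (∀ k : ℤ, 1 ≤ k → k ≤ (n : ℤ) - 1 →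
      ∃ m : ℕ, m < (nb n a k).length ∧
        List.Chain' (· < ·)
          ((nb n a k).dropLast.drop m ++ k :: (nb n a k).dropLast.take m))

/-- The letter at (0-based) position `j` of the subword of `λ̂ₙ` with skip set `S`:
the identity `e` if `j` is a skip, and the simple reflection `sⱼ` otherwise. -/
def letterAt (n : ℕ) (S : Finset ℕ) (j : ℕ) : ℤ → ℤ :=
  if j ∈ S then id else simpleRefl n (j : ℤ)

/-- The subword of the word `λ̂ₙ = [s₀, s₁, …, s_{n-1}]^{n-1}` (of length `N = n(n-1)`,
whose letter at 0-based position `j` is `s_j`) with skip set `S`. -/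
def subword (n : ℕ) (S : Finset ℕ) : List (ℤ → ℤ) :=
  (List.range (n * (n - 1))).map (letterAt n S)

/-- `u_{(j)}`: the product of the first `j` letters of the subword. -/
def uPref (n : ℕ) (S : Finset ℕ) (j : ℕ) : ℤ → ℤ :=
  listProd ((subword n S).take j)

/-- `u_{(j)}⁻¹`: since every letter is an involution, the inverse of `u_{(j)}` is the
product of the first `j` letters in reverse order. -/
def uPrefInv (n : ℕ) (S : Finset ℕ) (j : ℕ) : ℤ → ℤ :=
  listProd (((subword n S).take j).reverse)

/-- The element `t_{j+1} = u_{(j)} s_j u_{(j)}⁻¹` of `inv(u)` (0-based `j`). -/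
def conjAt (n : ℕ) (S : Finset ℕ) (j : ℕ) : ℤ → ℤ :=
  uPref n S j ∘ simpleRefl n (j : ℤ) ∘ uPrefInv n S j

/-- The (0-based) skip indices of the subword, in increasing order. -/
def skipIdx (S : Finset ℕ) : List ℕ := S.sort (· ≤ ·)

/-- The sequence `r^u` of skip reflections of the subword with skip set `S`. -/
def skipRefls (n : ℕ) (S : Finset ℕ) : List (ℤ → ℤ) :=
  (skipIdx S).map (conjAt n S)

/-- The subword with skip set `S` is a member of `S_n`: it is a subword of `λ̂ₙ`
with exactly `2n-2` skips whose product is the identity. -/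
def SnMem (n : ℕ) (S : Finset ℕ) : Prop :=
  S ⊆ Finset.range (n * (n - 1)) ∧ S.card = 2 * n - 2 ∧ listProd (subword n S) = id

/-- The product of the suffix `r_{i+1} ⋯ r_m` (0-based: drops the first `i` factors). -/
def suffixProd (l : List (ℤ → ℤ)) (i : ℕ) : ℤ → ℤ := listProd (l.drop i)

/-- The cyclic segment product `u_{a+1} u_{a+2} ⋯ u_{a+L}` of the subword with skip set
`S` (0-based starting position `a`, indices taken modulo `N = n(n-1)`). -/
def segProd (n : ℕ) (S : Finset ℕ) (a L : ℕ) : ℤ → ℤ :=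
  listProd ((List.range L).map (fun t => letterAt n S ((a + t) % (n * (n - 1)))))

/-!
Follow one integer as the letters `u_1, u_2, …` of the subword act on it one after another,
cyclically. The letters are involutions, so `w(k) - k` for a cyclic segment `w` is the
difference of two positions of this orbit at most `n(n-1)` steps apart, and the orbit has period
`n(n-1)` because `u_1 ⋯ u_N = e`. At step `j` the letter `s_j` moves the integer up only from a
value `≡ j` and down only from a value `≡ j + 1 (mod n)`; counting multiples of `n` shows that a
period has at most `n - 2` down-steps, hence as many up-steps, which bounds every displacement.
-/

open Finset Function

theorem Int.card_filter_dvd_Ioc_sub_mul {r : ℤ} (hr : 0 < r) (b : ℤ) (m : ℕ) :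
    #{x ∈ Ioc (b - r * m) b | r ∣ x} = m := by
  have hdiv : (((b - r * m : ℤ)) : ℚ) / r = (b : ℚ) / r - (m : ℤ) := by
    push_cast; field_simp
  have := Int.Ioc_filter_dvd_card (b - r * m) b hr
  rw [hdiv, Int.floor_sub_intCast] at this
  omega

theorem listProd_append (l₁ l₂ : List (ℤ → ℤ)) :
    listProd (l₁ ++ l₂) = listProd l₁ ∘ listProd l₂ := by
  induction l₁ with
  | nil => rfl
  | cons g l ih => simp only [listProd, List.cons_append, List.foldr_cons] at ih ⊢; rw [ih]; rfl

section Trajectory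

variable (g : ℕ → ℤ → ℤ)

def trajectory (x : ℤ) : ℕ → ℤ
  | 0 => x
  | j + 1 => g j (trajectory x j)

variable {g}

theorem listProd_map_range_trajectory (hg : ∀ j, Involutive (g j)) (x : ℤ) (a L : ℕ) :
    listProd ((List.range L).map fun t => g (a + t)) (trajectory g x (a + L)) =
      trajectory g x a := by
  induction L with
  | zero => rfl
  | succ L ih =>
    rw [List.range_succ, List.map_append, listProd_append, comp_apply, ← add_assoc,
      trajectory]
    exact (congrArg _ (hg _ _)).trans ih

theorem trajectory_surjective (hg : ∀ j, Involutive (g j)) (m : ℕ) :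
    Surjective fun x => trajectory g x m := by
  induction m with
  | zero => exact fun k => ⟨k, rfl⟩
  | succ m ih =>
    intro k
    obtain ⟨x, hx⟩ := ih (g m k)
    exact ⟨x, by simp only [trajectory, hx, hg m k]⟩

theorem trajectory_add_of_periodic {N : ℕ} (hper : Periodic g N) {x : ℤ}
    (hx : trajectory g x N = x) (j : ℕ) : trajectory g x (N + j) = trajectory g x j := by
  induction j with
  | zero => exact hx
  | succ j ih => rw [← add_assoc, trajectory, trajectory, ih, add_comm N, hper]

end Trajectory

section SimpleWalk

/-- The motion of a single integer under the letters of a subword of `λ̂ₙ`. -/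
def IsSimpleWalk (n : ℕ) (f : ℕ → ℤ) : Prop :=
  ∀ j : ℕ, (f (j + 1) = f j + 1 ∧ (n : ℤ) ∣ f j - j) ∨
    (f (j + 1) = f j - 1 ∧ (n : ℤ) ∣ f j - j - 1) ∨ f (j + 1) = f j

def ups (f : ℕ → ℤ) : ℕ → ℕ := Nat.count fun t => f (t + 1) = f t + 1

def downs (f : ℕ → ℤ) : ℕ → ℕ := Nat.count fun t => f (t + 1) = f t - 1

namespace IsSimpleWalk

variable {n : ℕ} {f : ℕ → ℤ}

theorem eq_add_ups_sub_downs (hf : IsSimpleWalk n f) (j : ℕ) :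
    f j = f 0 + ups f j - downs f j := by
  induction j with
  | zero => simp [ups, downs]
  | succ j ih =>
    simp only [ups, downs, Nat.count_succ] at ih ⊢
    rcases hf j with ⟨e, -⟩ | ⟨e, -⟩ | e <;> rw [e] <;> push_cast <;> split_ifs <;> omega

theorem antitone_sub (hf : IsSimpleWalk n f) : Antitone fun j => f j - j :=
  antitone_nat_of_succ_le fun j => by
    rcases hf j with ⟨e, -⟩ | ⟨e, -⟩ | e <;> push_cast <;> omega

theorem dvd_of_up (hf : IsSimpleWalk n f) {t : ℕ} (ht : f (t + 1) = f t + 1) :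
    (n : ℤ) ∣ f t - t := by
  rcases hf t with ⟨-, h⟩ | ⟨e, -⟩ | e <;> first | exact h | omega

theorem dvd_of_down (hf : IsSimpleWalk n f) {t : ℕ} (ht : f (t + 1) = f t - 1) :
    (n : ℤ) ∣ f t - t - 1 := by
  rcases hf t with ⟨e, -⟩ | ⟨-, h⟩ | e <;> first | exact h | omega

theorem sub_lt_of_down (hf : IsSimpleWalk n f) {t j : ℕ} (ht : f (t + 1) = f t - 1)
    (htj : t < j) : f j - j < f t - t - 1 := by
  have := hf.antitone_sub (Nat.succ_le_of_lt htj)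
  simp only [ht] at this
  push_cast at this
  linarith

theorem exists_dvd_mem_Ioc (hn : 2 ≤ n) (hf : IsSimpleWalk n f)
    (hclosed : f (n * (n - 1)) = f 0) (hdowns : 0 < downs f (n * (n - 1))) :
    ∃ t₀, f t₀ - t₀ ∈ Ioc (f 0 - (n * (n - 1) : ℕ)) (f 0) ∧
      (n : ℤ) ∣ f t₀ - t₀ := by
  by_cases hx : (n : ℤ) ∣ f 0
  · have hNpos : (0 : ℤ) < n * (n - 1 : ℕ) := mul_pos (by omega) (by omega)
    exact ⟨0, by simp [hx, hNpos]⟩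
  have hups : 0 < ups f (n * (n - 1)) := by have := hf.eq_add_ups_sub_downs (n * (n - 1)); omega
  rw [ups, Nat.count_eq_card_filter_range] at hups
  obtain ⟨t₀, ht₀⟩ := card_pos.mp hups
  obtain ⟨ht₀N, hup⟩ := mem_filter.mp ht₀
  have hdvd := hf.dvd_of_up hup
  have hne : f t₀ - t₀ ≠ f 0 - (n * (n - 1) : ℕ) := fun h => hx <| by
    simpa [h] using hdvd.add (dvd_mul_right (n : ℤ) (n - 1 : ℕ))
  have hlo := hf.antitone_sub (mem_range.mp ht₀N).le
  have hhi := hf.antitone_sub (Nat.zero_le t₀)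
  simp only [hclosed, Nat.cast_zero, sub_zero] at hlo hhi
  exact ⟨t₀, mem_Ioc.mpr ⟨lt_of_le_of_ne hlo hne.symm, hhi⟩, hdvd⟩

/-- Along the walk, `f j - j` falls from `x` to `x - n(n-1)`, jumping over a multiple of `n` at
each down-step and landing on one at each up-step (and at the start if `n ∣ x`), so the
down-steps jump over all but at least one of the `n - 1` multiples of `n` in `(x - n(n-1), x]`. -/
theorem downs_le (hn : 2 ≤ n) (hf : IsSimpleWalk n f) (hclosed : f (n * (n - 1)) = f 0) :
    downs f (n * (n - 1)) ≤ n - 2 := by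
  rcases Nat.eq_zero_or_pos (downs f (n * (n - 1))) with h0 | hpos
  · omega
  obtain ⟨t₀, ht₀, hdvd₀⟩ := hf.exists_dvd_mem_Ioc hn hclosed hpos
  set N := n * (n - 1)
  set M := {z ∈ Ioc (f 0 - N) (f 0) | (n : ℤ) ∣ z}
  have hM : #M = n - 1 := by
    simpa only [M, N, Nat.cast_mul] using
      Int.card_filter_dvd_Ioc_sub_mul (r := n) (by omega) (f 0) (n - 1)
  have hcard : downs f N ≤ #(M.erase (f t₀ - t₀)) := by
    rw [downs, Nat.count_eq_card_filter_range]
    refine card_le_card_of_injOn (fun t => f t - t - 1) (fun t ht => ?_)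
      (fun t ht t' ht' h => ?_)
    · obtain ⟨htN, hdown⟩ := mem_filter.mp ht
      have hlo := hf.sub_lt_of_down hdown (Nat.lt_succ_self t)
      have hN := hf.antitone_sub (mem_range.mp htN)
      have h0 := hf.antitone_sub (Nat.zero_le t)
      simp only [hclosed, Nat.cast_zero, sub_zero] at hN h0
      refine mem_erase.mpr
        ⟨?_, mem_filter.mpr ⟨mem_Ioc.mpr ⟨?_, ?_⟩, hf.dvd_of_down hdown⟩⟩
      · rcases lt_or_ge t t₀ with h | h
        · exact (hf.sub_lt_of_down hdown h).ne'
        · linarith [hf.antitone_sub h]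
      · push_cast at hlo hN; linarith
      · linarith
    · have hdown := (mem_filter.mp ht).2
      have hdown' := (mem_filter.mp ht').2
      rcases lt_trichotomy t t' with h' | h' | h'
      · linarith [hf.sub_lt_of_down hdown h']
      · exact h'
      · linarith [hf.sub_lt_of_down hdown' h']
  rw [card_erase_of_mem (mem_filter.mpr ⟨ht₀, hdvd₀⟩), hM] at hcard
  omega

theorem abs_sub_le (hn : 2 ≤ n) (hf : IsSimpleWalk n f) (hclosed : f (n * (n - 1)) = f 0)
    {i j : ℕ} (hi : i ≤ n * (n - 1)) (hj : j ≤ n * (n - 1)) : |f i - f j| ≤ n - 2 := by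
  wlog hij : i ≤ j generalizing i j
  · rw [abs_sub_comm]; exact this hj hi (le_of_not_ge hij)
  have hd := hf.downs_le hn hclosed
  have hN := hf.eq_add_ups_sub_downs (n * (n - 1))
  have := hf.eq_add_ups_sub_downs i
  have := hf.eq_add_ups_sub_downs j
  have : ups f i ≤ ups f j := Nat.count_monotone _ hij
  have : downs f i ≤ downs f j := Nat.count_monotone _ hij
  have : ups f j ≤ ups f (n * (n - 1)) := Nat.count_monotone _ hj
  have : downs f j ≤ downs f (n * (n - 1)) := Nat.count_monotone _ hj
  rw [abs_le]
  omega

end IsSimpleWalk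

end SimpleWalk

theorem simpleRefl_apply (n : ℕ) (i k : ℤ) :
    simpleRefl n i k =
      if (n : ℤ) ∣ k - i then k + 1 else if (n : ℤ) ∣ k - i - 1 then k - 1 else k := by
  simp only [simpleRefl, affRefl, ← Int.dvd_iff_emod_eq_zero, sub_add_eq_sub_sub]
  split_ifs <;> ring

theorem simpleRefl_involutive {n : ℕ} (hn : 2 ≤ n) (i : ℤ) : Involutive (simpleRefl n i) := by
  have hn1 : ¬ (n : ℤ) ∣ 1 := fun h => by have := Int.le_of_dvd one_pos h; omega
  intro k
  by_cases h₁ : (n : ℤ) ∣ k - i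
  · have : ¬ (n : ℤ) ∣ k + 1 - i := fun h => hn1 (by simpa using dvd_sub h h₁)
    simp [simpleRefl_apply, h₁, this, show k + 1 - i - 1 = k - i by ring]
  by_cases h₂ : (n : ℤ) ∣ k - i - 1
  · simp [simpleRefl_apply, h₁, h₂, show k - 1 - i = k - i - 1 by ring]
  · simp [simpleRefl_apply, h₁, h₂]

theorem letterAt_involutive {n : ℕ} (hn : 2 ≤ n) (S : Finset ℕ) (j : ℕ) :
    Involutive (letterAt n S j) := by
  unfold letterAt
  split_ifs
  exacts [fun _ => rfl, simpleRefl_involutive hn j]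

def periodicLetter (n : ℕ) (S : Finset ℕ) (j : ℕ) : ℤ → ℤ :=
  letterAt n S (j % (n * (n - 1)))

theorem periodicLetter_periodic (n : ℕ) (S : Finset ℕ) :
    Periodic (periodicLetter n S) (n * (n - 1)) := fun j => by
  simp only [periodicLetter, Nat.add_mod_right]

theorem periodicLetter_involutive {n : ℕ} (hn : 2 ≤ n) (S : Finset ℕ) (j : ℕ) :
    Involutive (periodicLetter n S j) :=
  letterAt_involutive hn S _

theorem isSimpleWalk_trajectory_periodicLetter {n : ℕ} (S : Finset ℕ) (x : ℤ) :
    IsSimpleWalk n (trajectory (periodicLetter n S) x) := by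
  intro j
  have hj : (n : ℤ) ∣ (j : ℤ) - (j % (n * (n - 1)) : ℕ) :=
    Nat.modEq_iff_dvd.mp ((Nat.mod_modEq j _).of_mul_right _)
  simp only [trajectory, periodicLetter, letterAt]
  split_ifs
  · exact Or.inr (Or.inr rfl)
  rw [simpleRefl_apply]
  split_ifs with h₁ h₂
  · exact Or.inl ⟨rfl, by simpa using h₁.sub hj⟩
  · refine Or.inr (Or.inl ⟨rfl, ?_⟩)
    simpa [sub_sub_eq_add_sub, sub_right_comm] using h₂.sub hj
  · exact Or.inr (Or.inr rfl)

theorem trajectory_periodicLetter_period {n : ℕ} (hn : 2 ≤ n) (S : Finset ℕ)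
    (h : listProd (subword n S) = id) (x : ℤ) :
    trajectory (periodicLetter n S) x (n * (n - 1)) = x := by
  have hsub : ((List.range (n * (n - 1))).map fun t => periodicLetter n S (0 + t)) =
      subword n S :=
    List.map_congr_left fun t ht => by
      rw [periodicLetter, zero_add, Nat.mod_eq_of_lt (List.mem_range.mp ht)]
  have := listProd_map_range_trajectory (periodicLetter_involutive hn S) x 0 (n * (n - 1))
  rwa [hsub, h, zero_add] at this

theorem stmt9_general (n : ℕ) (hn : 2 ≤ n) (S : Finset ℕ)
    (h : listProd (subword n S) = id) :
    ∀ k : ℤ, ∀ a : ℕ, a < n * (n - 1) → ∀ L : ℕ, 1 ≤ L → L ≤ n * (n - 1) →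
      |segProd n S a L k - k| ≤ (n : ℤ) - 2 := by
  intro k a ha L _ hL
  have hg := periodicLetter_involutive hn S
  obtain ⟨x, rfl⟩ : ∃ x, trajectory (periodicLetter n S) x (a + L) = k :=
    trajectory_surjective hg (a + L) k
  have hclosed := trajectory_periodicLetter_period hn S h x
  have hwalk := isSimpleWalk_trajectory_periodicLetter (n := n) S x
  have hseg : segProd n S a L (trajectory (periodicLetter n S) x (a + L)) =
      trajectory (periodicLetter n S) x a :=
    listProd_map_range_trajectory hg x a L
  rw [hseg]
  rcases le_or_gt (a + L) (n * (n - 1)) with hle | hgt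
  · exact hwalk.abs_sub_le hn hclosed ha.le hle
  · rw [show a + L = n * (n - 1) + (a + L - n * (n - 1)) by omega,
      trajectory_add_of_periodic (periodicLetter_periodic n S) hclosed]
    exact hwalk.abs_sub_le hn hclosed ha.le (by omega)

/-- For an `e`-subword `u` of `λ̂ₙ`, every cyclic segment product
`w = u_a ⋯ u_{a+L-1}` (0-based starting position `a < N`, length `1 ≤ L ≤ N`,
indices modulo `N = n(n-1)`) satisfies `|w(k) - k| ≤ n - 2` for every integer `k`. -/
theorem stmt9 (n : ℕ) (hn : 2 ≤ n) (S : Finset ℕ)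
    (hS : S ⊆ Finset.range (n * (n - 1)))
    (h : listProd (subword n S) = id) :
    ∀ k : ℤ, ∀ a : ℕ, a < n * (n - 1) → ∀ L : ℕ, 1 ≤ L → L ≤ n * (n - 1) →
      |segProd n S a L k - k| ≤ (n : ℤ) - 2 :=
  stmt9_general n hn S h
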